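/- arXiv:1005.3342 — 11 statements merged into one kernel-verified Lean document; each statement's English description precedes it below -/
import Mathlib

section
/- Let A be an n×n matrix with entries in {0,1} whose lower-right d1×d2 block (last d1 rows and last d2 columns) consists entirely of zeroes, and suppose every all-zero submatrix of A, given by rows R and columns C with all entries zero, satisfies |R|+|C| ≤ d1+d2. Write A in block form A = [[X, Y],[Z, W]] where W is this d1×d2 zero block, Y consists of the first n−d1 rows and last d2 columns, and Z consists of the last d1 rows and first n−d2 columns. Then Y has a transversal consisting of all 1's (a set of min(n−d1, d2) entries equal to 1, no two sharing a row or column), and likewise Z has a transversal consisting of all 1's (of size min(d1, n−d2)). -/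
lemma card_filter_le_fin (n m : ℕ) :
    (Finset.univ.filter fun i : Fin n => m ≤ (i : ℕ)).card = n - m := by
  rcases lt_or_ge m n with h | h
  · have : (Finset.univ.filter fun i : Fin n => m ≤ (i : ℕ)) = Finset.Ici (⟨m, h⟩ : Fin n) := by
      ext i; simp [Fin.le_def]
    rw [this, Fin.card_Ici]
  · have : (Finset.univ.filter fun i : Fin n => m ≤ (i : ℕ)) = ∅ := by
      apply Finset.filter_eq_empty_iff.mpr
      intro i _
      have := i.isLt; omega
    rw [this]; simp; omega

lemma exists_transversal_aux (n d1 d2 : ℕ) (hd1 : d1 ≤ n) (hd2 : d2 ≤ n)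
    (A : Fin n → Fin n → ℕ)
    (hA : ∀ i j, A i j = 0 ∨ A i j = 1)
    (hW : ∀ i j : Fin n, n - d1 ≤ (i : ℕ) → n - d2 ≤ (j : ℕ) → A i j = 0)
    (hHall : ∀ (R C : Finset (Fin n)),
      (∀ i ∈ R, ∀ j ∈ C, A i j = 0) → R.card + C.card ≤ d1 + d2) :
    ∃ (ρ : Fin (min (n - d1) d2) → Fin n) (c : Fin (min (n - d1) d2) → Fin n),
      Function.Injective ρ ∧ Function.Injective c ∧
      (∀ k, (ρ k : ℕ) < n - d1) ∧ (∀ k, n - d2 ≤ (c k : ℕ)) ∧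
      (∀ k, A (ρ k) (c k) = 1) := by
  have hn : n ≤ d1 + d2 := by
    have := hHall Finset.univ ∅ (by simp)
    simpa using this
  have hm : min (n - d1) d2 = n - d1 := by omega
  set M := min (n - d1) d2 with hM
  have hrowlt : ∀ k : Fin M, (k : ℕ) < n := fun k => by have := k.isLt; omega
  set row : Fin M → Fin n := fun k => ⟨(k : ℕ), hrowlt k⟩ with hrowdef
  have hrowinj : Function.Injective row := by
    intro a b h
    rw [Fin.ext_iff] at h ⊢
    simpa [hrowdef] using h
  set t : Fin M → Finset (Fin n) :=
    fun k => Finset.univ.filter (fun j => n - d2 ≤ (j : ℕ) ∧ A (row k) j = 1) with ht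
  have htmem : ∀ k j, j ∈ t k ↔ (n - d2 ≤ (j : ℕ) ∧ A (row k) j = 1) := by
    intro k j; simp [ht]
  have hall : ∀ s : Finset (Fin M), s.card ≤ (s.biUnion t).card := by
    intro s
    set N := s.biUnion t with hN
    have hNsub : N ⊆ Finset.univ.filter (fun j : Fin n => n - d2 ≤ (j : ℕ)) := by
      intro j hj
      rw [hN, Finset.mem_biUnion] at hj
      obtain ⟨k, _, hk⟩ := hj
      simp only [Finset.mem_filter, Finset.mem_univ, true_and]
      exact ((htmem k j).1 hk).1
    have key := hHall
      (s.image row ∪ Finset.univ.filter (fun i : Fin n => n - d1 ≤ (i : ℕ)))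
      ((Finset.univ.filter (fun j : Fin n => n - d2 ≤ (j : ℕ))) \ N) ?_
    · have hdisj : Disjoint (s.image row)
          (Finset.univ.filter (fun i : Fin n => n - d1 ≤ (i : ℕ))) := by
        rw [Finset.disjoint_left]
        intro i hi hif
        rw [Finset.mem_image] at hi
        obtain ⟨k, _, rfl⟩ := hi
        rw [Finset.mem_filter] at hif
        have := k.isLt
        simp only [hrowdef] at hif
        omega
      have c1 : (s.image row ∪
          Finset.univ.filter (fun i : Fin n => n - d1 ≤ (i : ℕ))).card
          = s.card + (n - (n - d1)) := by
        rw [Finset.card_union_of_disjoint hdisj,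
          Finset.card_image_of_injective s hrowinj, card_filter_le_fin]
      have c2 : ((Finset.univ.filter (fun j : Fin n => n - d2 ≤ (j : ℕ))) \ N).card
          = (n - (n - d2)) - N.card := by
        rw [Finset.card_sdiff_of_subset hNsub, card_filter_le_fin]
      have hNle : N.card ≤ n - (n - d2) := by
        rw [← card_filter_le_fin n (n - d2)]
        exact Finset.card_le_card hNsub
      rw [c1, c2] at key
      omega
    · intro i hi j hj
      rw [Finset.mem_sdiff, Finset.mem_filter] at hj
      obtain ⟨⟨-, hj1⟩, hj2⟩ := hj
      rw [Finset.mem_union] at hi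
      rcases hi with hi | hi
      · rw [Finset.mem_image] at hi
        obtain ⟨k, hk, rfl⟩ := hi
        rcases hA (row k) j with h0 | h1
        · exact h0
        · exfalso
          apply hj2
          rw [hN, Finset.mem_biUnion]
          exact ⟨k, hk, (htmem k j).2 ⟨hj1, h1⟩⟩
      · rw [Finset.mem_filter] at hi
        exact hW i j hi.2 hj1
  obtain ⟨f, hfinj, hf⟩ := (Finset.all_card_le_biUnion_card_iff_existsInjective' t).1 hall
  refine ⟨row, f, hrowinj, hfinj, ?_, ?_, ?_⟩
  · intro k; have := k.isLt; simpa [hrowdef] using by omega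
  · intro k; exact ((htmem k (f k)).1 (hf k)).1
  · intro k; exact ((htmem k (f k)).1 (hf k)).2

/-- If an n×n 0-1 matrix A has its lower-right d1×d2 block zero, and every all-zero
submatrix of A has sum of dimensions at most d1 + d2, then both the upper-right block Y
(first n-d1 rows, last d2 columns) and the lower-left block Z (last d1 rows, first n-d2
columns) have transversals consisting of all 1's. -/
theorem blocks_have_one_transversals (n d1 d2 : ℕ) (hd1 : d1 ≤ n) (hd2 : d2 ≤ n)
    (A : Fin n → Fin n → ℕ)
    (hA : ∀ i j, A i j = 0 ∨ A i j = 1)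
    (hW : ∀ i j : Fin n, n - d1 ≤ (i : ℕ) → n - d2 ≤ (j : ℕ) → A i j = 0)
    (hHall : ∀ (R C : Finset (Fin n)),
      (∀ i ∈ R, ∀ j ∈ C, A i j = 0) → R.card + C.card ≤ d1 + d2) :
    (∃ (ρ : Fin (min (n - d1) d2) → Fin n) (c : Fin (min (n - d1) d2) → Fin n),
      Function.Injective ρ ∧ Function.Injective c ∧
      (∀ k, (ρ k : ℕ) < n - d1) ∧ (∀ k, n - d2 ≤ (c k : ℕ)) ∧
      (∀ k, A (ρ k) (c k) = 1)) ∧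
    (∃ (ρ : Fin (min d1 (n - d2)) → Fin n) (c : Fin (min d1 (n - d2)) → Fin n),
      Function.Injective ρ ∧ Function.Injective c ∧
      (∀ k, n - d1 ≤ (ρ k : ℕ)) ∧ (∀ k, (c k : ℕ) < n - d2) ∧
      (∀ k, A (ρ k) (c k) = 1)) := by
  constructor
  · exact exists_transversal_aux n d1 d2 hd1 hd2 A hA hW hHall
  · have hn : n ≤ d1 + d2 := by
      have := hHall Finset.univ ∅ (by simp)
      simpa using this
    obtain ⟨ρ', c', hρ'inj, hc'inj, hρ'lt, hc'ge, h1⟩ :=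
      exists_transversal_aux n d2 d1 hd2 hd1 (fun i j => A j i)
        (fun i j => hA j i)
        (fun i j hi hj => hW j i hj hi)
        (fun R C h => by
          have := hHall C R (fun i hi j hj => h j hj i hi)
          omega)
    have e : min d1 (n - d2) = min (n - d2) d1 := min_comm _ _
    have hcastinj : Function.Injective (Fin.cast e) := by
      intro a b h
      rw [Fin.ext_iff] at h ⊢
      simpa using h
    exact ⟨fun k => c' (Fin.cast e k), fun k => ρ' (Fin.cast e k),
      hc'inj.comp hcastinj, hρ'inj.comp hcastinj,
      fun k => hc'ge (Fin.cast e k), fun k => hρ'lt (Fin.cast e k),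
      fun k => h1 (Fin.cast e k)⟩
end

section
/- Let m, n be positive integers and let A ∈ D(m,n). Then A has a transversal all of whose entries are nonzero; that is, there exists a permutation σ ∈ S_n such that a_{iσ(i)} > 0 for all i = 1,…,n. -/
/-!
Hall's marriage theorem applied to the bipartite graph of nonzero entries. If a set `s` of rows
meets only the columns in `N(s)`, the mass `#s • c` carried by those rows lies in the columns
of `N(s)`, which carry at most `#N(s) • c`; hence `#s ≤ #N(s)` whenever `c > 0`.
-/

/-- D(m,n): n×n matrices with nonnegative integer entries, all row and column sums equal m. -/
def IsDSM (m n : ℕ) (A : Fin n → Fin n → ℕ) : Prop :=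
  (∀ i, ∑ j, A i j = m) ∧ (∀ j, ∑ i, A i j = m)

open Finset

section Hall

variable {ι κ R : Type*} [Fintype ι] [Fintype κ] [DecidableEq κ]
  [AddCommMonoid R] [LinearOrder R] [IsOrderedCancelAddMonoid R]
  {A : ι → κ → R} {c : R}

theorem card_le_card_biUnion_pos_of_sum_eq (hA : ∀ i j, 0 ≤ A i j)
    (hrow : ∀ i, ∑ j, A i j = c) (hcol : ∀ j, ∑ i, A i j ≤ c) (hc : 0 < c)
    (s : Finset ι) : #s ≤ #(s.biUnion fun i => {j | 0 < A i j}) := by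
  set N := s.biUnion fun i => {j | 0 < A i j}
  have hsupp (i : ι) (hi : i ∈ s) : ∑ j ∈ N, A i j = ∑ j, A i j :=
    sum_subset (subset_univ N) fun j _ hj =>
      ((hA i j).eq_or_lt.resolve_right fun h => hj (mem_biUnion.2 ⟨i, hi, by simpa using h⟩)).symm
  rw [← nsmul_le_nsmul_iff_left hc]
  calc #s • c = ∑ i ∈ s, ∑ j ∈ N, A i j := by
        rw [sum_congr rfl hsupp, sum_congr rfl fun i _ => hrow i, sum_const]
    _ = ∑ j ∈ N, ∑ i ∈ s, A i j := sum_comm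
    _ ≤ #N • c := sum_le_card_nsmul N _ c fun j _ =>
        (sum_le_sum_of_subset_of_nonneg (subset_univ s) fun i _ _ => hA i j).trans (hcol j)

theorem exists_injective_pos_of_sum_eq (hA : ∀ i j, 0 ≤ A i j)
    (hrow : ∀ i, ∑ j, A i j = c) (hcol : ∀ j, ∑ i, A i j ≤ c) (hc : 0 < c) :
    ∃ f : ι → κ, Function.Injective f ∧ ∀ i, 0 < A i (f i) := by
  obtain ⟨f, hf, hpos⟩ := (all_card_le_biUnion_card_iff_exists_injective _).1
    (card_le_card_biUnion_pos_of_sum_eq hA hrow hcol hc)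
  exact ⟨f, hf, fun i => by simpa using hpos i⟩

end Hall

theorem dsm_has_nonzero_transversal_general (m n : ℕ) (hm : 0 < m)
    (A : Fin n → Fin n → ℕ) (hA : IsDSM m n A) :
    ∃ σ : Equiv.Perm (Fin n), ∀ i, 0 < A i (σ i) := by
  obtain ⟨f, hf, hpos⟩ :=
    exists_injective_pos_of_sum_eq (fun i j => Nat.zero_le (A i j)) hA.1 (fun j => (hA.2 j).le) hm
  exact ⟨Equiv.ofBijective f (Finite.injective_iff_bijective.1 hf), hpos⟩

/-- Every integer doubly-stochastic matrix has a transversal of nonzero entries. -/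
theorem dsm_has_nonzero_transversal (m n : ℕ) (hm : 0 < m) (hn : 0 < n)
    (A : Fin n → Fin n → ℕ) (hA : IsDSM m n A) :
    ∃ σ : Equiv.Perm (Fin n), ∀ i, 0 < A i (σ i) :=
  dsm_has_nonzero_transversal_general m n hm A hA
end

section
/- Let m, n be positive integers. Then L(m,n) ≤ L(m+1,n); more precisely, for every matrix A ∈ D(m+1,n) there exists a matrix A' ∈ D(m,n) with tdet A' ≤ tdet A. -/
/-- tdet A: maximum of a transversal sum over all permutations. -/
def tdet {n : ℕ} (A : Fin n → Fin n → ℕ) : ℕ :=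
  Finset.univ.sup fun σ : Equiv.Perm (Fin n) => ∑ i, A i (σ i)

open Finset

section Support

variable {ι : Type*} [Fintype ι] [DecidableEq ι]

theorem card_le_card_biUnion_support {A : ι → ι → ℕ} {c : ℕ} (hc : 0 < c)
    (hrow : ∀ i, c ≤ ∑ j, A i j) (hcol : ∀ j, ∑ i, A i j ≤ c) (s : Finset ι) :
    #s ≤ #(s.biUnion fun i => {j | 0 < A i j}) := by
  set N := s.biUnion fun i => ({j | 0 < A i j} : Finset ι)
  have hsupp : ∀ i ∈ s, ∑ j, A i j = ∑ j ∈ N, A i j := fun i hi =>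
    (sum_subset (subset_univ N) fun j _ hj => by
      by_contra h
      exact hj (mem_biUnion.mpr ⟨i, hi, by simpa [Nat.pos_iff_ne_zero] using h⟩)).symm
  refine Nat.le_of_mul_le_mul_right ?_ hc
  calc #s * c = ∑ _i ∈ s, c := by rw [sum_const, smul_eq_mul]
    _ ≤ ∑ i ∈ s, ∑ j ∈ N, A i j := sum_le_sum fun i hi => (hrow i).trans (hsupp i hi).le
    _ = ∑ j ∈ N, ∑ i ∈ s, A i j := sum_comm
    _ ≤ ∑ j ∈ N, ∑ i, A i j := sum_le_sum fun j _ => sum_le_sum_of_subset (subset_univ s)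
    _ ≤ ∑ _j ∈ N, c := sum_le_sum fun j _ => hcol j
    _ = #N * c := by rw [sum_const, smul_eq_mul]

theorem exists_perm_forall_pos {A : ι → ι → ℕ} {c : ℕ} (hc : 0 < c)
    (hrow : ∀ i, c ≤ ∑ j, A i j) (hcol : ∀ j, ∑ i, A i j ≤ c) :
    ∃ σ : Equiv.Perm ι, ∀ i, 0 < A i (σ i) := by
  obtain ⟨f, hf_inj, hf⟩ := (all_card_le_biUnion_card_iff_exists_injective _).mp
    (card_le_card_biUnion_support hc hrow hcol)
  exact ⟨Equiv.ofBijective f (Finite.injective_iff_bijective.mp hf_inj),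
    fun i => (mem_filter.mp (hf i)).2⟩

theorem sum_sub_single_eq {f : ι → ℕ} {k : ι} (hk : 0 < f k) :
    ∑ j, (f j - if k = j then 1 else 0) = ∑ j, f j - 1 := by
  have hle : ∀ j ∈ univ, (if k = j then 1 else 0) ≤ f j := fun j _ => by
    split_ifs with h
    · exact h ▸ hk
    · exact Nat.zero_le _
  rw [sum_tsub_distrib _ hle, sum_ite_eq, if_pos (mem_univ k)]

end Support

theorem isDSM_sub_perm {m n : ℕ} {A : Fin n → Fin n → ℕ} (hA : IsDSM (m + 1) n A)
    {σ : Equiv.Perm (Fin n)} (hσ : ∀ i, 0 < A i (σ i)) :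
    IsDSM m n fun i j => A i j - if σ i = j then 1 else 0 := by
  obtain ⟨hrow, hcol⟩ := hA
  refine ⟨fun i => by rw [sum_sub_single_eq (hσ i), hrow i, Nat.add_sub_cancel], fun j => ?_⟩
  simp_rw [← σ.eq_symm_apply, @eq_comm _ _ (σ.symm j)]
  have hpos : 0 < A (σ.symm j) j := by simpa using hσ (σ.symm j)
  rw [sum_sub_single_eq (f := (A · j)) hpos, hcol j, Nat.add_sub_cancel]

theorem tdet_mono {n : ℕ} {A B : Fin n → Fin n → ℕ} (h : ∀ i j, A i j ≤ B i j) :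
    tdet A ≤ tdet B :=
  sup_mono_fun fun σ _ => sum_le_sum fun i _ => h i (σ i)

theorem L_monotone_general (m n : ℕ)
    (A : Fin n → Fin n → ℕ) (hA : IsDSM (m + 1) n A) :
    ∃ A' : Fin n → Fin n → ℕ, IsDSM m n A' ∧ tdet A' ≤ tdet A := by
  obtain ⟨σ, hσ⟩ := exists_perm_forall_pos m.succ_pos (fun i => (hA.1 i).ge) (fun j => (hA.2 j).le)
  exact ⟨_, isDSM_sub_perm hA hσ, tdet_mono fun i j => Nat.sub_le _ _⟩

/-- L(m,n) ≤ L(m+1,n): for every A ∈ D(m+1,n) there is A' ∈ D(m,n) with tdet A' ≤ tdet A. -/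
theorem L_monotone (m n : ℕ) (hm : 0 < m) (hn : 0 < n)
    (A : Fin n → Fin n → ℕ) (hA : IsDSM (m + 1) n A) :
    ∃ A' : Fin n → Fin n → ℕ, IsDSM m n A' ∧ tdet A' ≤ tdet A :=
  L_monotone_general m n A hA
end

section
/- Let m, n be positive integers with 1 ≤ m ≤ n. Then L(m,n) = n; that is, every A ∈ D(m,n) satisfies tdet A ≥ n, and there exists A ∈ D(m,n) with tdet A = n. -/
open Finset

lemma sum_le_tdet {n : ℕ} (A : Fin n → Fin n → ℕ) (σ : Equiv.Perm (Fin n)) :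
    ∑ i, A i (σ i) ≤ tdet A :=
  le_sup (f := fun σ : Equiv.Perm (Fin n) => ∑ i, A i (σ i)) (mem_univ σ)

lemma tdet_le_of_forall_le_one {n : ℕ} (A : Fin n → Fin n → ℕ) (hA : ∀ i j, A i j ≤ 1) :
    tdet A ≤ n :=
  Finset.sup_le fun σ _ => (sum_le_sum fun i _ => hA i (σ i)).trans (by simp)

namespace IsDSM

variable {m n : ℕ} {A : Fin n → Fin n → ℕ}

lemma card_le_card_biUnion_support (hA : IsDSM m n A) (hm : 0 < m) (s : Finset (Fin n)) :
    #s ≤ #(s.biUnion fun i => {j | A i j ≠ 0}) := by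
  set T := s.biUnion fun i => {j | A i j ≠ 0}
  have hrow_supp : ∀ i ∈ s, ∑ j ∈ T, A i j = ∑ j, A i j := fun i hi =>
    sum_subset (subset_univ _) fun j _ hj => by
      by_contra h
      exact hj (mem_biUnion.2 ⟨i, hi, mem_filter.2 ⟨mem_univ _, h⟩⟩)
  refine Nat.le_of_mul_le_mul_left ?_ hm
  calc m * #s = ∑ i ∈ s, ∑ j, A i j := by simp [hA.1, mul_comm]
    _ = ∑ i ∈ s, ∑ j ∈ T, A i j := (sum_congr rfl hrow_supp).symm
    _ = ∑ j ∈ T, ∑ i ∈ s, A i j := sum_comm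
    _ ≤ ∑ j ∈ T, ∑ i, A i j := sum_le_sum fun j _ => sum_le_sum_of_subset (subset_univ s)
    _ = m * #T := by simp [hA.2, mul_comm]

lemma exists_perm_forall_ne_zero (hA : IsDSM m n A) (hm : 0 < m) :
    ∃ σ : Equiv.Perm (Fin n), ∀ i, A i (σ i) ≠ 0 := by
  obtain ⟨f, hf_inj, hf⟩ :=
    (all_card_le_biUnion_card_iff_exists_injective _).1 (hA.card_le_card_biUnion_support hm)
  exact ⟨Equiv.ofBijective f hf_inj.bijective_of_finite, fun i => by simpa using hf i⟩

lemma le_tdet (hA : IsDSM m n A) (hm : 0 < m) : n ≤ tdet A := by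
  obtain ⟨σ, hσ⟩ := hA.exists_perm_forall_ne_zero hm
  calc n = ∑ _i : Fin n, 1 := by simp
    _ ≤ ∑ i, A i (σ i) := sum_le_sum fun i _ => Nat.one_le_iff_ne_zero.2 (hσ i)
    _ ≤ tdet A := sum_le_tdet A σ

end IsDSM

/-- Row `i` has ones exactly in the columns `i, i + 1, …, i + m - 1` (mod `n`). -/
def cyclicBand (m n : ℕ) [NeZero n] (i j : Fin n) : ℕ :=
  if ((j - i : Fin n) : ℕ) < m then 1 else 0

section cyclicBand

variable {m n : ℕ} [NeZero n]

lemma isDSM_cyclicBand (hmn : m ≤ n) : IsDSM m n (cyclicBand m n) := by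
  set v : Fin n → ℕ := fun k => if (k : ℕ) < m then 1 else 0
  have hv : ∑ k, v k = m := by
    simp [v, Fin.card_filter_val_lt, hmn]
  exact ⟨fun i => (Equiv.sum_comp (Equiv.subRight i) v).trans hv,
    fun j => (Equiv.sum_comp (Equiv.subLeft j) v).trans hv⟩

lemma tdet_cyclicBand (hm : 0 < m) : tdet (cyclicBand m n) = n := by
  refine le_antisymm (tdet_le_of_forall_le_one _ fun i j => ?_) ?_
  · unfold cyclicBand
    split <;> simp
  · calc n = ∑ i, cyclicBand m n i (Equiv.refl _ i) := by simp [cyclicBand, hm]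
      _ ≤ tdet (cyclicBand m n) := sum_le_tdet _ _

end cyclicBand

/-- If 1 ≤ m ≤ n then L(m,n) = n. -/
theorem L_eq_n_of_m_le_n (m n : ℕ) (hm : 1 ≤ m) (hmn : m ≤ n) :
    (∀ A : Fin n → Fin n → ℕ, IsDSM m n A → n ≤ tdet A) ∧
    (∃ A : Fin n → Fin n → ℕ, IsDSM m n A ∧ tdet A = n) := by
  have : NeZero n := ⟨by omega⟩
  exact ⟨fun A hA => hA.le_tdet hm, cyclicBand m n, isDSM_cyclicBand hmn, tdet_cyclicBand hm⟩
end

section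
/- Let m = qn + r with q, r nonnegative integers, n a positive integer, and n/2 ≤ r < n. Then every matrix A ∈ D(m,n) satisfies tdet A ≥ m + (n − r) = n(q+1); in particular L(m,n) ≥ n(q+1). -/
/-!
Fix a permutation σ attaining `tdet A`. Exchanging the images of `i` and `j` cannot increase
the transversal sum, so `A i (σ j) + A j (σ i) ≤ A i (σ i) + A j (σ j)`. Summing over `j` and
using that row `i` and column `σ i` both sum to `m` gives `2 m ≤ n A i (σ i) + tdet A` for
every `i`. If `tdet A < n (q + 1)`, then `n A i (σ i) > q n + 2 r - n ≥ q n` since `2 r ≥ n`,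
so every diagonal entry `A i (σ i)` is at least `q + 1`, forcing `tdet A ≥ n (q + 1)`.
-/

open Finset

theorem Fintype.sum_add_pair_eq_of_eq_off_pair {ι M : Type*} [Fintype ι] [DecidableEq ι]
    [AddCommMonoid M] {f g : ι → M} {i j : ι} (hij : i ≠ j)
    (h : ∀ k, k ≠ i → k ≠ j → f k = g k) :
    ∑ k, f k + (g i + g j) = ∑ k, g k + (f i + f j) := by
  have hsub : ({i, j} : Finset ι) ⊆ univ := subset_univ _
  rw [← sum_sdiff hsub (f := f), ← sum_sdiff hsub (f := g), sum_pair hij, sum_pair hij,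
    Finset.sum_congr rfl fun k hk => h k (by aesop) (by aesop)]
  abel

section Transversal

variable {n : ℕ} (A : Fin n → Fin n → ℕ)

theorem sum_apply_perm_le_tdet (σ : Equiv.Perm (Fin n)) : ∑ i, A i (σ i) ≤ tdet A :=
  le_sup (f := fun σ : Equiv.Perm (Fin n) => ∑ i, A i (σ i)) (mem_univ σ)

theorem exists_perm_sum_apply_eq_tdet : ∃ σ : Equiv.Perm (Fin n), ∑ i, A i (σ i) = tdet A := by
  obtain ⟨σ, -, hσ⟩ := exists_mem_eq_sup univ univ_nonempty
    fun σ : Equiv.Perm (Fin n) => ∑ i, A i (σ i)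
  exact ⟨σ, hσ.symm⟩

variable {A} {σ : Equiv.Perm (Fin n)}

theorem add_le_add_of_sum_apply_eq_tdet (hσ : ∑ k, A k (σ k) = tdet A) (i j : Fin n) :
    A i (σ j) + A j (σ i) ≤ A i (σ i) + A j (σ j) := by
  rcases eq_or_ne i j with rfl | hij
  · rfl
  have hswap := Fintype.sum_add_pair_eq_of_eq_off_pair hij
    (f := fun k => A k ((σ * Equiv.swap i j) k)) (g := fun k => A k (σ k))
    fun k hki hkj => by simp [Equiv.swap_apply_of_ne_of_ne hki hkj]
  simp only [Equiv.Perm.mul_apply, Equiv.swap_apply_left, Equiv.swap_apply_right] at hswap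
  have := sum_apply_perm_le_tdet A (σ * Equiv.swap i j)
  simp only [Equiv.Perm.mul_apply] at this
  omega

theorem two_mul_le_mul_add_tdet {m : ℕ} (hA : IsDSM m n A) (hσ : ∑ k, A k (σ k) = tdet A)
    (i : Fin n) : 2 * m ≤ n * A i (σ i) + tdet A := by
  have hsum : ∑ j, (A i (σ j) + A j (σ i)) ≤ ∑ j, (A i (σ i) + A j (σ j)) :=
    sum_le_sum fun j _ => add_le_add_of_sum_apply_eq_tdet hσ i j
  rw [sum_add_distrib, sum_add_distrib, Equiv.sum_comp σ (A i), hA.1 i, hA.2 (σ i),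
    sum_const, card_univ, Fintype.card_fin, smul_eq_mul, hσ] at hsum
  omega

end Transversal

theorem tdet_lower_bound_large_r_general (m n q r : ℕ)
    (hm : m = q * n + r) (hr1 : n ≤ 2 * r) (hr2 : r < n)
    (A : Fin n → Fin n → ℕ) (hA : IsDSM m n A) :
    m + (n - r) ≤ tdet A ∧ m + (n - r) = n * (q + 1) := by
  have hbound : m + (n - r) = n * (q + 1) := by
    subst hm
    rw [mul_add_one, mul_comm]
    omega
  refine ⟨?_, hbound⟩
  rw [hbound]
  obtain ⟨σ, hσ⟩ := exists_perm_sum_apply_eq_tdet A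
  by_contra! hlt
  have hdiag : ∀ i, q + 1 ≤ A i (σ i) := fun i => by
    have h2m := two_mul_le_mul_add_tdet hA hσ i
    by_contra! hle
    have : n * A i (σ i) ≤ n * q := Nat.mul_le_mul_left n (by omega)
    nlinarith
  have : n * (q + 1) ≤ tdet A :=
    calc n * (q + 1) = ∑ _i : Fin n, (q + 1) := by simp
      _ ≤ ∑ i, A i (σ i) := sum_le_sum fun i _ => hdiag i
      _ = tdet A := hσ
  omega

/-- If m = qn + r with n/2 ≤ r < n, then every A ∈ D(m,n) has tdet A ≥ m + (n - r) = n(q+1). -/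
theorem tdet_lower_bound_large_r (m n q r : ℕ) (hn : 0 < n)
    (hm : m = q * n + r) (hr1 : n ≤ 2 * r) (hr2 : r < n)
    (A : Fin n → Fin n → ℕ) (hA : IsDSM m n A) :
    m + (n - r) ≤ tdet A ∧ m + (n - r) = n * (q + 1) :=
  tdet_lower_bound_large_r_general m n q r hm hr1 hr2 A hA
end

section
/- Let m = qn + r with q, r nonnegative integers, n a positive integer, and 0 < r ≤ n/2. Then every matrix A ∈ D(m,n) satisfies tdet A ≥ m + r = qn + 2r; in particular L(m,n) ≥ m + r. -/
/-- Egerváry duality (one direction): there is an integer cover whose total is at most `tdet A`. -/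
lemma exists_cover {n : ℕ} (A : Fin n → Fin n → ℕ) :
    ∃ u v : Fin n → ℤ, (∀ i j, (A i j : ℤ) ≤ u i + v j) ∧
      (∑ i, u i) + (∑ j, v j) ≤ (tdet A : ℤ) := by
  classical
  set P : ℤ → Prop := fun t => ∃ u v : Fin n → ℤ,
    (∀ i j, (A i j : ℤ) ≤ u i + v j) ∧ (∑ i, u i) + (∑ j, v j) = t with hP
  have Hinh : ∃ z, P z := by
    refine ⟨(∑ i : Fin n, ((Finset.univ.sup fun p : Fin n × Fin n => A p.1 p.2 : ℕ) : ℤ))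
        + ∑ _j : Fin n, (0 : ℤ),
      (fun _ => ((Finset.univ.sup fun p : Fin n × Fin n => A p.1 p.2 : ℕ) : ℤ)),
      (fun _ => 0), ?_, rfl⟩
    intro i j
    have : A i j ≤ Finset.univ.sup fun p : Fin n × Fin n => A p.1 p.2 :=
      Finset.le_sup (f := fun p : Fin n × Fin n => A p.1 p.2) (Finset.mem_univ (i, j))
    simpa using (Int.ofNat_le.mpr this)
  have Hbdd : ∃ b : ℤ, ∀ z : ℤ, P z → b ≤ z := by
    refine ⟨0, ?_⟩
    rintro z ⟨u, v, hcov, rfl⟩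
    have h1 : (0:ℤ) ≤ ∑ i : Fin n, (A i i : ℤ) :=
      Finset.sum_nonneg fun i _ => Int.ofNat_nonneg _
    have h2 : ∑ i : Fin n, (A i i : ℤ) ≤ ∑ i : Fin n, (u i + v i) :=
      Finset.sum_le_sum fun i _ => hcov i i
    rw [Finset.sum_add_distrib] at h2
    linarith
  obtain ⟨t0, ⟨u, v, hcov, hsum⟩, hleast⟩ := Int.exists_least_of_bdd Hbdd Hinh
  set t : Fin n → Finset (Fin n) :=
    fun i => Finset.univ.filter fun j => (A i j : ℤ) = u i + v j with ht
  by_cases hall : ∀ s : Finset (Fin n), s.card ≤ (s.biUnion t).card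
  · obtain ⟨f, hfinj, hf⟩ := (Finset.all_card_le_biUnion_card_iff_exists_injective t).mp hall
    have hbij : Function.Bijective f := Finite.injective_iff_bijective.mp hfinj
    set σ : Equiv.Perm (Fin n) := Equiv.ofBijective f hbij with hσ
    have heq : ∀ i, (A i (σ i) : ℤ) = u i + v (σ i) := by
      intro i
      have := hf i
      rw [ht] at this
      simpa [hσ, Equiv.ofBijective] using (Finset.mem_filter.mp this).2
    have h1 : ∑ i, A i (σ i) ≤ tdet A := by
      exact Finset.le_sup (f := fun σ : Equiv.Perm (Fin n) => ∑ i, A i (σ i)) (Finset.mem_univ σ)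
    have h2 : (∑ i, (A i (σ i) : ℤ)) = (∑ i, u i) + (∑ j, v j) := by
      rw [Finset.sum_congr rfl (fun i _ => heq i), Finset.sum_add_distrib]
      rw [Equiv.sum_comp σ v]
    refine ⟨u, v, hcov, ?_⟩
    have h3 : (∑ i, (A i (σ i) : ℤ)) ≤ (tdet A : ℤ) := by exact_mod_cast h1
    linarith [h2 ▸ h3]
  · exfalso
    push_neg at hall
    obtain ⟨S, hS⟩ := hall
    set u' : Fin n → ℤ := fun i => u i - if i ∈ S then 1 else 0 with hu'
    set v' : Fin n → ℤ := fun j => v j + if j ∈ S.biUnion t then 1 else 0 with hv'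
    have hcov' : ∀ i j, (A i j : ℤ) ≤ u' i + v' j := by
      intro i j
      by_cases hi : i ∈ S
      · by_cases hj : j ∈ S.biUnion t
        · simp only [hu', hv', if_pos hi, if_pos hj]
          linarith [hcov i j]
        · have hnotin : j ∉ t i := fun h => hj (Finset.mem_biUnion.mpr ⟨i, hi, h⟩)
          rw [ht] at hnotin
          simp only [Finset.mem_filter, Finset.mem_univ, true_and] at hnotin
          have : (A i j : ℤ) < u i + v j := lt_of_le_of_ne (hcov i j) hnotin
          simp only [hu', hv', if_pos hi, if_neg hj]
          linarith
      · simp only [hu', hv', if_neg hi]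
        split <;> linarith [hcov i j]
    have hsum' : (∑ i, u' i) + (∑ j, v' j)
        = t0 - (S.card : ℤ) + ((S.biUnion t).card : ℤ) := by
      have e1 : (∑ i, u' i) = (∑ i, u i) - (S.card : ℤ) := by
        simp only [hu', Finset.sum_sub_distrib]
        congr 1
        rw [Finset.sum_ite_mem, Finset.univ_inter, Finset.sum_const]
        simp
      have e2 : (∑ j, v' j) = (∑ j, v j) + ((S.biUnion t).card : ℤ) := by
        simp only [hv', Finset.sum_add_distrib]
        congr 1
        rw [Finset.sum_ite_mem, Finset.univ_inter, Finset.sum_const]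
        simp
      rw [e1, e2, ← hsum]; ring
    have hP' : P (t0 - (S.card : ℤ) + ((S.biUnion t).card : ℤ)) := ⟨u', v', hcov', hsum'⟩
    have := hleast _ hP'
    have hcast : ((S.biUnion t).card : ℤ) < (S.card : ℤ) := by exact_mod_cast hS
    linarith

/-- Row-sum bound: a cover's total is at least `m` plus a residue. -/
lemma row_bound {n : ℕ} (hn : 0 < n) (m : ℕ) (u : Fin n → ℤ) (V : ℤ)
    (h : ∀ i, (m : ℤ) ≤ n * u i + V) :
    (m : ℤ) + (V - m) % n ≤ (∑ i, u i) + V := by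
  have hn' : (0:ℤ) < n := by exact_mod_cast hn
  have hc : ∀ i, -((V - (m:ℤ)) / n) ≤ u i := by
    intro i
    have h2 : (-(u i)) * n ≤ V - m := by linarith [h i]
    have h3 := (Int.le_ediv_iff_mul_le hn').mpr h2
    linarith
  have hsum : (n : ℤ) * (-((V - (m:ℤ))/n)) ≤ ∑ i, u i := by
    calc (n:ℤ) * (-((V - (m:ℤ))/n)) = ∑ _i : Fin n, (-((V - (m:ℤ))/n)) := by
          rw [Finset.sum_const, Finset.card_univ, Fintype.card_fin]
          simp [mul_comm]
      _ ≤ ∑ i, u i := Finset.sum_le_sum (fun i _ => hc i)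
  have hdm := Int.mul_ediv_add_emod (V - (m:ℤ)) n
  linarith

/-- If m = qn + r with 0 < r ≤ n/2, then every A ∈ D(m,n) has tdet A ≥ m + r = qn + 2r. -/
theorem tdet_lower_bound_small_r (m n q r : ℕ) (hn : 0 < n)
    (hm : m = q * n + r) (hr1 : 0 < r) (hr2 : 2 * r ≤ n)
    (A : Fin n → Fin n → ℕ) (hA : IsDSM m n A) :
    m + r ≤ tdet A := by
  obtain ⟨u, v, hcov, hle⟩ := exists_cover A
  set U := ∑ i, u i with hU
  set V := ∑ j, v j with hV
  have hn' : (0:ℤ) < n := by exact_mod_cast hn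
  have hrow : ∀ i, (m:ℤ) ≤ n * u i + V := by
    intro i
    have h1 : ((m:ℤ)) = ∑ j, (A i j : ℤ) := by exact_mod_cast (hA.1 i).symm
    have h2 : ∑ j, (A i j:ℤ) ≤ ∑ j, (u i + v j) := Finset.sum_le_sum fun j _ => hcov i j
    have h3 : ∑ j : Fin n, (u i + v j) = n * u i + V := by
      rw [Finset.sum_add_distrib, Finset.sum_const, Finset.card_univ, Fintype.card_fin, hV]
      simp [mul_comm]
    linarith
  have hcol : ∀ j, (m:ℤ) ≤ n * v j + U := by
    intro j
    have h1 : ((m:ℤ)) = ∑ i, (A i j : ℤ) := by exact_mod_cast (hA.2 j).symm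
    have h2 : ∑ i, (A i j:ℤ) ≤ ∑ i, (v j + u i) := Finset.sum_le_sum fun i _ => by
      linarith [hcov i j]
    have h3 : ∑ i : Fin n, (v j + u i) = n * v j + U := by
      rw [Finset.sum_add_distrib, Finset.sum_const, Finset.card_univ, Fintype.card_fin, hU]
      simp [mul_comm]
    linarith
  have hT1 : (m:ℤ) + (V - m) % n ≤ U + V := row_bound hn m u V hrow
  have hT2 : (m:ℤ) + (U - m) % n ≤ U + V := by
    have := row_bound hn m v U hcol
    linarith
  set s : ℤ := (V - (m:ℤ)) % n with hs
  set s' : ℤ := (U - (m:ℤ)) % n with hs'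
  have hs0 : 0 ≤ s := Int.emod_nonneg _ (ne_of_gt hn')
  have hs'0 : 0 ≤ s' := Int.emod_nonneg _ (ne_of_gt hn')
  have hs'lt : s' < n := Int.emod_lt_of_pos _ hn'
  have ha := Int.mul_ediv_add_emod (V - (m:ℤ)) n
  have hb := Int.mul_ediv_add_emod (U - (m:ℤ)) n
  set a : ℤ := (V - (m:ℤ)) / n with haa
  set b : ℤ := (U - (m:ℤ)) / n with hbb
  -- V = n*a + m + s, U = n*b + m + s'
  have hVe : V = n * a + m + s := by linarith
  have hUe : U = n * b + m + s' := by linarith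
  have hmz : (m:ℤ) = q * n + r := by exact_mod_cast hm
  have hgoal : ((m:ℤ)) + r ≤ U + V := by
    by_cases hcase : (r:ℤ) ≤ s'
    · linarith
    · push_neg at hcase
      have hrs : (r:ℤ) + s' < n := by
        have : (2*r : ℤ) ≤ n := by exact_mod_cast hr2
        linarith
      set w : ℤ := a + b + q with hw
      have hnw : (n:ℤ) * w = n*a + n*b + n*q := by ring
      have hw1 : -(r:ℤ) - s' ≤ n * w := by
        -- from hT1 : m + s ≤ U + V = n*(a+b) + 2m + s + s'
        have : (m:ℤ) + s ≤ n*a + n*b + 2*m + s + s' := by linarith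
        have hmq : (n:ℤ)*q = m - r := by linarith [hmz]
        linarith
      have hw0 : 0 ≤ w := by
        by_contra hneg
        push_neg at hneg
        have hw2 : w ≤ -1 := by linarith
        have : (n:ℤ) * w ≤ n * (-1) := by
          exact mul_le_mul_of_nonneg_left hw2 (le_of_lt hn')
        linarith
      have hnw0 : 0 ≤ (n:ℤ) * w := mul_nonneg (le_of_lt hn') hw0
      have hmq : (n:ℤ)*q = m - r := by linarith [hmz]
      linarith
  have : ((m + r : ℕ) : ℤ) ≤ (tdet A : ℤ) := by push_cast; linarith
  exact_mod_cast this
end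

section
/- Let m = qn + r with q ≥ 1 and r nonnegative integers, n a positive integer, and n/3 ≤ r < n/2. Then L(m,n) = m + r = qn + 2r. -/
/-!
Let σ be a transversal of maximal weight T. Exchanging the images of two rows i, j cannot
increase the weight, so a_{iσj} + a_{jσi} ≤ a_{iσi} + a_{jσj}; summing over j gives
2m ≤ n a_{iσi} + T. If T < qn + 2r, every a_{iσi} therefore exceeds q, and T ≥ n(q + 1) > qn + 2r.

For the extremal matrix write n = 2r + s with s ≤ r and split the indices into blocks of sizes
r and r + s. The entries are q on the large diagonal block and q + 1 on the off-diagonal blocks;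
on the small diagonal block they are q - 1 where i + j mod r < s and q elsewhere. The matrix is
symmetric and all its row sums are qn + r. Every entry is at most q + [i small] + [j small], where
"small" means lying in the block of size r, so no transversal exceeds qn + 2r.
-/

open Finset

section Transversal

variable {ι M : Type*} [Fintype ι]

def IsMaxTransversal [AddCommMonoid M] [LE M] (A : ι → ι → M) (σ : Equiv.Perm ι) : Prop :=
  ∀ τ : Equiv.Perm ι, ∑ k, A k (τ k) ≤ ∑ k, A k (σ k)

theorem IsMaxTransversal.swap_le [DecidableEq ι] [AddCommMonoid M] [PartialOrder M]
    [IsOrderedCancelAddMonoid M] {A : ι → ι → M} {σ : Equiv.Perm ι}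
    (hσ : IsMaxTransversal A σ) (i j : ι) :
    A i (σ j) + A j (σ i) ≤ A i (σ i) + A j (σ j) := by
  rcases eq_or_ne i j with rfl | hij
  · rfl
  set τ := (Equiv.swap i j).trans σ
  have hsplit : ∀ f : ι → M, ∑ k, f k = ∑ k ∈ univ \ {i, j}, f k + (f i + f j) := fun f => by
    rw [← sum_pair hij, sum_sdiff (subset_univ _)]
  have hrest : ∑ k ∈ univ \ {i, j}, A k (τ k) = ∑ k ∈ univ \ {i, j}, A k (σ k) := by
    refine sum_congr rfl fun k hk => ?_
    simp only [mem_sdiff, mem_insert, mem_singleton, not_or] at hk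
    simp [τ, Equiv.swap_apply_of_ne_of_ne hk.2.1 hk.2.2]
  have h := hσ τ
  rw [hsplit (fun k => A k (τ k)), hsplit (fun k => A k (σ k)), hrest] at h
  simpa [τ] using le_of_add_le_add_left h

end Transversal

theorem exists_isMaxTransversal_tdet_eq {n : ℕ} (A : Fin n → Fin n → ℕ) :
    ∃ σ, IsMaxTransversal A σ ∧ tdet A = ∑ k, A k (σ k) := by
  obtain ⟨σ, -, hσ⟩ := exists_mem_eq_sup univ univ_nonempty fun σ : Equiv.Perm (Fin n) =>
    ∑ k, A k (σ k)
  exact ⟨σ, fun τ => hσ ▸ le_sup (f := fun σ : Equiv.Perm (Fin n) => ∑ k, A k (σ k))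
    (mem_univ τ), hσ⟩

theorem tdet_le_of_le_add {n : ℕ} {A : Fin n → Fin n → ℕ} (a b : Fin n → ℕ)
    (h : ∀ i j, A i j ≤ a i + b j) : tdet A ≤ ∑ i, a i + ∑ j, b j :=
  Finset.sup_le fun σ _ => calc
    ∑ i, A i (σ i) ≤ ∑ i, (a i + b (σ i)) := sum_le_sum fun i _ => h i (σ i)
    _ = ∑ i, a i + ∑ j, b j := by rw [sum_add_distrib, Equiv.sum_comp σ b]

theorem IsMaxTransversal.two_mul_le {m n : ℕ} {A : Fin n → Fin n → ℕ} {σ : Equiv.Perm (Fin n)}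
    (hσ : IsMaxTransversal A σ) (hA : IsDSM m n A) (i : Fin n) :
    2 * m ≤ n * A i (σ i) + ∑ k, A k (σ k) := by
  have h := sum_le_sum fun j (_ : j ∈ univ) => hσ.swap_le i j
  rw [sum_add_distrib, sum_add_distrib, Equiv.sum_comp σ (A i), hA.1 i, hA.2 (σ i)] at h
  simpa [two_mul] using h

theorem le_tdet_of_isDSM {n q r : ℕ} {A : Fin n → Fin n → ℕ} (hA : IsDSM (q * n + r) n A)
    (hr : 2 * r ≤ n) : q * n + 2 * r ≤ tdet A := by
  obtain ⟨σ, hσ, hT⟩ := exists_isMaxTransversal_tdet_eq A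
  rw [hT]
  by_contra! hlt
  have hdiag : ∀ i, q + 1 ≤ A i (σ i) := fun i => by
    have := hσ.two_mul_le hA i
    have : q * n < A i (σ i) * n := by linarith
    exact Nat.lt_of_mul_lt_mul_right this
  have := sum_le_sum fun i (_ : i ∈ univ) => hdiag i
  simp only [sum_const, card_univ, Fintype.card_fin, smul_eq_mul] at this
  linarith

theorem isDSM_of_symm {κ : Type*} [Fintype κ] {m n : ℕ} {W : κ → κ → ℕ}
    (hsymm : ∀ x y, W x y = W y x) (hrow : ∀ x, ∑ y, W x y = m) (e : Fin n ≃ κ) :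
    IsDSM m n fun i j => W (e i) (e j) :=
  ⟨fun i => by rw [Equiv.sum_comp e (W (e i)), hrow],
   fun j => by simp_rw [hsymm _ (e j)]; rw [Equiv.sum_comp e (W (e j)), hrow]⟩

theorem sum_fin_ite_val_lt_add {q r s : ℕ} (hq : 1 ≤ q) (hs : s ≤ r) :
    (∑ k : Fin r, if (k : ℕ) < s then q - 1 else q) + s = r * q := by
  have hcard : ∑ k : Fin r, (if (k : ℕ) < s then 1 else 0) = s := by
    rw [sum_boole, Fin.card_filter_val_lt, min_eq_right hs, Nat.cast_id]
  calc (∑ k : Fin r, if (k : ℕ) < s then q - 1 else q) + s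
      = ∑ k : Fin r, ((if (k : ℕ) < s then q - 1 else q) + if (k : ℕ) < s then 1 else 0) := by
        rw [sum_add_distrib, hcard]
    _ = ∑ _k : Fin r, q := sum_congr rfl fun k _ => by split_ifs <;> omega
    _ = r * q := by simp

section ExtremalMatrix

variable (q r s : ℕ)

def extremalMatrix : Fin r ⊕ Fin (r + s) → Fin r ⊕ Fin (r + s) → ℕ
  | .inl i, .inl j => if ((i + j : Fin r) : ℕ) < s then q - 1 else q
  | .inl _, .inr _ => q + 1
  | .inr _, .inl _ => q + 1
  | .inr _, .inr _ => q

variable {q r s}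

theorem extremalMatrix_symm (x y : Fin r ⊕ Fin (r + s)) :
    extremalMatrix q r s x y = extremalMatrix q r s y x := by
  rcases x with i | i <;> rcases y with j | j <;> simp [extremalMatrix, add_comm]

theorem sum_extremalMatrix [NeZero r] (hq : 1 ≤ q) (hs : s ≤ r) (x : Fin r ⊕ Fin (r + s)) :
    ∑ y, extremalMatrix q r s x y = q * (r + (r + s)) + r := by
  rcases x with i | i
  · have hband := sum_fin_ite_val_lt_add hq hs
    rw [← Equiv.sum_comp (Equiv.addLeft i), Equiv.coe_addLeft] at hband
    simp only [extremalMatrix, Fintype.sum_sum_type, sum_const, card_univ, Fintype.card_fin,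
      smul_eq_mul]
    linarith
  · simp [Fintype.sum_sum_type, extremalMatrix]
    ring

theorem extremalMatrix_le (x y : Fin r ⊕ Fin (r + s)) :
    extremalMatrix q r s x y ≤
      Sum.elim (fun _ => q + 1) (fun _ => q) x + Sum.elim (fun _ => 1) (fun _ => 0) y := by
  rcases x with i | i <;> rcases y with j | j <;>
    simp only [extremalMatrix, Sum.elim_inl, Sum.elim_inr] <;> (try split_ifs) <;> omega

end ExtremalMatrix

theorem L_eq_third_half_general (m n q r : ℕ) (hq : 1 ≤ q)
    (hm : m = q * n + r) (hr1 : n ≤ 3 * r) (hr2 : 2 * r < n) :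
    (∀ A : Fin n → Fin n → ℕ, IsDSM m n A → q * n + 2 * r ≤ tdet A) ∧
    (∃ A : Fin n → Fin n → ℕ, IsDSM m n A ∧ tdet A = q * n + 2 * r) := by
  subst hm
  refine ⟨fun A hA => le_tdet_of_isDSM hA hr2.le, ?_⟩
  obtain ⟨s, rfl⟩ : ∃ s, n = r + (r + s) := ⟨n - 2 * r, by omega⟩
  have : NeZero r := ⟨by omega⟩
  let e := (finSumFinEquiv (m := r) (n := r + s)).symm
  have hA := isDSM_of_symm extremalMatrix_symm (sum_extremalMatrix hq (by omega)) e
  refine ⟨_, hA, le_antisymm ?_ (le_tdet_of_isDSM hA hr2.le)⟩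
  refine (tdet_le_of_le_add _ _ fun i j => extremalMatrix_le (e i) (e j)).trans_eq ?_
  rw [Equiv.sum_comp e, Equiv.sum_comp e]
  simp only [Fintype.sum_sum_type, Sum.elim_inl, Sum.elim_inr, sum_const, card_univ,
    Fintype.card_fin, smul_eq_mul, mul_one]
  ring

/-- If m = qn + r with q ≥ 1 and n/3 ≤ r < n/2, then L(m,n) = m + r = qn + 2r. -/
theorem L_eq_third_half (m n q r : ℕ) (hn : 0 < n) (hq : 1 ≤ q)
    (hm : m = q * n + r) (hr1 : n ≤ 3 * r) (hr2 : 2 * r < n) :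
    (∀ A : Fin n → Fin n → ℕ, IsDSM m n A → q * n + 2 * r ≤ tdet A) ∧
    (∃ A : Fin n → Fin n → ℕ, IsDSM m n A ∧ tdet A = q * n + 2 * r) :=
  L_eq_third_half_general m n q r hq hm hr1 hr2
end

section
/- Let m = nq + r where q ≥ 1 and 0 < r < n, and assume n > 2r + rq. Let l be the smallest positive integer satisfying q·l² + 2lr − rn ≥ 0. Then there exists a matrix A ∈ D(m,n) with tdet A ≤ nq + 2l; in particular L(m,n) ≤ nq + 2l. -/
open Finset

section ModCount

variable {l x : ℕ}

theorem card_Ico_filter_mod_eq_one (a : ℕ) (hx : x < l) :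
    #{t ∈ Ico a (a + l) | t % l = x} = 1 := by
  obtain ⟨t, ht, rfl⟩ := mem_image.1 (Nat.image_Ico_mod a l ▸ mem_range.2 hx)
  refine card_eq_one.2 ⟨t, ?_⟩
  ext s
  simp only [mem_filter, mem_singleton]
  exact ⟨fun ⟨hs, hst⟩ => Nat.mod_injOn_Ico a l hs ht hst,
    fun h => by subst h; exact ⟨ht, rfl⟩⟩

theorem card_Ico_filter_mod_eq (a k : ℕ) (hx : x < l) :
    #{t ∈ Ico a (a + l * k) | t % l = x} = k := by
  induction k with
  | zero => simp
  | succ k ih =>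
    rw [Nat.mul_succ, ← add_assoc, ← Ico_union_Ico_eq_Ico (by omega) le_self_add, filter_union,
      card_union_of_disjoint (disjoint_filter_filter (Ico_disjoint_Ico_consecutive _ _ _)), ih,
      card_Ico_filter_mod_eq_one _ hx]

theorem card_Ico_filter_mod_le {a b k : ℕ} (hx : x < l) (h : b ≤ a + l * k) :
    #{t ∈ Ico a b | t % l = x} ≤ k :=
  card_Ico_filter_mod_eq a k hx ▸ card_le_card (filter_subset_filter _ (Ico_subset_Ico_right h))

theorem le_card_Ico_filter_mod {a b k : ℕ} (hx : x < l) (h : a + l * k ≤ b) :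
    k ≤ #{t ∈ Ico a b | t % l = x} :=
  card_Ico_filter_mod_eq a k hx ▸ card_le_card (filter_subset_filter _ (Ico_subset_Ico_right h))

theorem sum_card_filter_mod_eq (s : Finset ℕ) (hl : 0 < l) :
    ∑ y ∈ range l, #{t ∈ s | t % l = y} = #s :=
  (card_eq_sum_card_fiberwise fun t _ => mem_range.2 (Nat.mod_lt t hl)).symm

theorem card_range_filter_mod_eq (k : ℕ) (hx : x < l) :
    #{t ∈ range (l * k) | t % l = x} = k := by
  simpa using card_Ico_filter_mod_eq 0 k hx

end ModCount

def cyclicDeal (l : ℕ) (c : ℕ → ℕ) (x j : ℕ) : ℕ :=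
  #{t ∈ Ico (∑ k ∈ range j, c k) (∑ k ∈ range (j + 1), c k) | t % l = x}

section CyclicDeal

variable {l : ℕ} {c : ℕ → ℕ}

theorem sum_cyclicDeal_slots (hl : 0 < l) (j : ℕ) : ∑ x ∈ range l, cyclicDeal l c x j = c j := by
  simp only [cyclicDeal]
  rw [sum_card_filter_mod_eq _ hl, Nat.card_Ico, sum_range_succ, Nat.add_sub_cancel_left]

theorem sum_cyclicDeal_batches (x N : ℕ) :
    ∑ j ∈ range N, cyclicDeal l c x j = #{t ∈ range (∑ k ∈ range N, c k) | t % l = x} := by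
  induction N with
  | zero => simp
  | succ N ih =>
    have hsplit := Ico_union_Ico_eq_Ico (Nat.zero_le (∑ k ∈ range N, c k))
      (sum_range_succ c N ▸ Nat.le_add_right _ _)
    simp only [Nat.Ico_zero_eq_range] at hsplit
    have hdisj := Ico_disjoint_Ico_consecutive 0 (∑ k ∈ range N, c k) (∑ k ∈ range (N + 1), c k)
    rw [Nat.Ico_zero_eq_range] at hdisj
    rw [sum_range_succ, ih, ← hsplit, filter_union,
      card_union_of_disjoint (disjoint_filter_filter hdisj), cyclicDeal]

theorem cyclicDeal_le {x j k : ℕ} (hx : x < l) (h : c j ≤ l * k) : cyclicDeal l c x j ≤ k :=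
  card_Ico_filter_mod_le hx (by rw [sum_range_succ]; omega)

end CyclicDeal

section Construction

variable (l m q r : ℕ)

def lowerColSum (j : ℕ) : ℕ := #{t ∈ range (m * (l * q + r)) | t % l = j}

def upperQuota (j : ℕ) : ℕ :=
  if j < l then (l + m) * q + r - lowerColSum l m q r j else l * q + r

def crossMatrix (i j : ℕ) : ℕ :=
  if i < l then cyclicDeal l (upperQuota l m q r) i j
  else if j < l then cyclicDeal l (fun _ => l * q + r) j (i - l)
  else q

variable {l m q r}

theorem mul_le_lowerColSum {j : ℕ} (hj : j < l) : m * q ≤ lowerColSum l m q r j := by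
  rw [lowerColSum, ← Nat.Ico_zero_eq_range]
  exact le_card_Ico_filter_mod hj (by nlinarith)

theorem lowerColSum_le (hcap : m * r ≤ l * (l * q + r)) {j : ℕ} (hj : j < l) :
    lowerColSum l m q r j ≤ (l + m) * q + r := by
  rw [lowerColSum, ← Nat.Ico_zero_eq_range]
  exact card_Ico_filter_mod_le hj (by nlinarith)

theorem upperQuota_le (j : ℕ) : upperQuota l m q r j ≤ l * q + r := by
  unfold upperQuota
  split_ifs with hj
  · have := mul_le_lowerColSum (r := r) (m := m) (q := q) hj
    have := add_mul l m q
    omega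
  · exact le_rfl

theorem sum_upperQuota (hl : 0 < l) (hcap : m * r ≤ l * (l * q + r)) :
    ∑ j ∈ range (l + m), upperQuota l m q r j = l * ((l + m) * q + r) := by
  have hlower : ∑ j ∈ range l, lowerColSum l m q r j = m * (l * q + r) := by
    simp only [lowerColSum]
    rw [sum_card_filter_mod_eq _ hl, card_range]
  have hupper :
      ∑ j ∈ range l, upperQuota l m q r j = l * ((l + m) * q + r) - m * (l * q + r) := by
    rw [sum_congr rfl fun j hj => by rw [upperQuota, if_pos (mem_range.1 hj)], sum_tsub_distrib _
      fun j hj => lowerColSum_le hcap (mem_range.1 hj), hlower, sum_const, card_range, smul_eq_mul]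
  have hrest : ∑ j ∈ range m, upperQuota l m q r (l + j) = m * (l * q + r) := by
    simp [upperQuota]
  have : m * (l * q + r) ≤ l * ((l + m) * q + r) := by nlinarith
  rw [sum_range_add, hupper, hrest, Nat.sub_add_cancel this]

theorem crossMatrix_of_lt {i : ℕ} (hi : i < l) (j : ℕ) :
    crossMatrix l m q r i j = cyclicDeal l (upperQuota l m q r) i j :=
  if_pos hi

theorem crossMatrix_add_of_lt (i : ℕ) {j : ℕ} (hj : j < l) :
    crossMatrix l m q r (l + i) j = cyclicDeal l (fun _ => l * q + r) j i := by
  simp [crossMatrix, hj]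

theorem crossMatrix_add_add (i j : ℕ) : crossMatrix l m q r (l + i) (l + j) = q := by
  simp [crossMatrix]

theorem crossMatrix_le (hrl : r < l) (i j : ℕ) :
    crossMatrix l m q r i j ≤ q + (if i < l then 1 else 0) + (if j < l then 1 else 0) := by
  have harm : l * q + r ≤ l * (q + 1) := by rw [mul_add_one]; omega
  unfold crossMatrix
  split_ifs with hi hj hj
  · exact (cyclicDeal_le hi ((upperQuota_le j).trans harm)).trans (by omega)
  · exact (cyclicDeal_le hi ((upperQuota_le j).trans harm)).trans (by omega)
  · have := cyclicDeal_le (c := fun _ => l * q + r) (j := i - l) hj harm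
    omega
  · omega

theorem sum_crossMatrix_row (hl : 0 < l) (hcap : m * r ≤ l * (l * q + r)) {i : ℕ}
    (hi : i < l + m) : ∑ j ∈ range (l + m), crossMatrix l m q r i j = (l + m) * q + r := by
  by_cases hil : i < l
  · simp only [crossMatrix_of_lt hil]
    rw [sum_cyclicDeal_batches, sum_upperQuota hl hcap, card_range_filter_mod_eq _ hil]
  · obtain ⟨i, rfl⟩ : ∃ i', i = l + i' := ⟨i - l, by omega⟩
    rw [sum_range_add, sum_congr rfl fun j hj => crossMatrix_add_of_lt i (mem_range.1 hj),
      sum_cyclicDeal_slots hl]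
    simp only [crossMatrix_add_add, sum_const, card_range, smul_eq_mul]
    ring

theorem sum_crossMatrix_col (hl : 0 < l) (hcap : m * r ≤ l * (l * q + r)) {j : ℕ}
    (hj : j < l + m) : ∑ i ∈ range (l + m), crossMatrix l m q r i j = (l + m) * q + r := by
  rw [sum_range_add, sum_congr rfl fun i hi => crossMatrix_of_lt (mem_range.1 hi) j,
    sum_cyclicDeal_slots hl]
  by_cases hjl : j < l
  · rw [sum_congr rfl fun i _ => crossMatrix_add_of_lt i hjl, sum_cyclicDeal_batches, sum_const,
      card_range, smul_eq_mul, upperQuota, if_pos hjl]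
    exact Nat.sub_add_cancel (lowerColSum_le hcap hjl)
  · obtain ⟨j, rfl⟩ : ∃ j', j = l + j' := ⟨j - l, by omega⟩
    simp only [crossMatrix_add_add, sum_const, card_range, smul_eq_mul, upperQuota, if_neg hjl]
    ring

end Construction

theorem tdet_le_sum_add_sum {n : ℕ} {A : Fin n → Fin n → ℕ} (u v : Fin n → ℕ)
    (h : ∀ i j, A i j ≤ u i + v j) : tdet A ≤ ∑ i, u i + ∑ j, v j :=
  Finset.sup_le fun σ _ => calc
    ∑ i, A i (σ i) ≤ ∑ i, (u i + v (σ i)) := sum_le_sum fun i _ => h i (σ i)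
    _ = ∑ i, u i + ∑ j, v j := by rw [sum_add_distrib, Equiv.sum_comp σ v]

theorem exists_isDSM_tdet_le {l m q r : ℕ} (hrl : r < l) (hcap : m * r ≤ l * (l * q + r)) :
    ∃ A : Fin (l + m) → Fin (l + m) → ℕ,
      IsDSM ((l + m) * q + r) (l + m) A ∧ tdet A ≤ (l + m) * q + 2 * l := by
  refine ⟨fun i j => crossMatrix l m q r i j, ⟨fun i => ?_, fun j => ?_⟩, ?_⟩
  · rw [Fin.sum_univ_eq_sum_range (crossMatrix l m q r i ·)]
    exact sum_crossMatrix_row (by omega) hcap i.2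
  · rw [Fin.sum_univ_eq_sum_range (crossMatrix l m q r · j)]
    exact sum_crossMatrix_col (by omega) hcap j.2
  · let e : ℕ → ℕ := fun i => if i < l then 1 else 0
    have he : ∑ i : Fin (l + m), e i = l := by
      rw [Fin.sum_univ_eq_sum_range e, sum_range_add]
      simp [e, filter_true_of_mem fun _ => mem_range.1]
    calc tdet _ ≤ ∑ i : Fin (l + m), (q + e i) + ∑ j : Fin (l + m), e j :=
          tdet_le_sum_add_sum _ _ fun i j => crossMatrix_le hrl i j
      _ = (l + m) * q + 2 * l := by
        rw [sum_add_distrib, he]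
        simp only [sum_const, card_univ, Fintype.card_fin, smul_eq_mul]
        ring

theorem upper_bound_even_general (m n q r l : ℕ)
    (hm : m = n * q + r) (hr1 : 0 < r) (hbig : 2 * r + r * q < n)
    (hineq : r * n ≤ q * l ^ 2 + 2 * l * r)
    (hmin : ∀ l' : ℕ, 0 < l' → l' < l → q * l' ^ 2 + 2 * l' * r < r * n) :
    ∃ A : Fin n → Fin n → ℕ, IsDSM m n A ∧ tdet A ≤ n * q + 2 * l := by
  have hrl : r < l := by
    by_contra! h
    have hsq : q * l ^ 2 + 2 * l * r ≤ q * r ^ 2 + 2 * r * r := by gcongr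
    nlinarith [mul_lt_mul_of_pos_left hbig hr1]
  have hln : l ≤ n := by
    by_contra! h
    have := hmin n (by omega) h
    nlinarith
  obtain ⟨k, rfl⟩ := Nat.exists_eq_add_of_le hln
  subst hm
  exact exists_isDSM_tdet_le hrl (by nlinarith)

/-- If m = nq + r, q ≥ 1, 0 < r < n, n > 2r + rq, and l is the smallest positive integer
with q·l² + 2lr - rn ≥ 0, then there is A ∈ D(m,n) with tdet A ≤ nq + 2l. -/
theorem upper_bound_even (m n q r l : ℕ) (hq : 1 ≤ q)
    (hm : m = n * q + r) (hr1 : 0 < r) (hr2 : r < n) (hbig : 2 * r + r * q < n)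
    (hl : 0 < l) (hineq : r * n ≤ q * l ^ 2 + 2 * l * r)
    (hmin : ∀ l' : ℕ, 0 < l' → l' < l → q * l' ^ 2 + 2 * l' * r < r * n) :
    ∃ A : Fin n → Fin n → ℕ, IsDSM m n A ∧ tdet A ≤ n * q + 2 * l :=
  upper_bound_even_general m n q r l hm hr1 hbig hineq hmin
end

section
/- Let m = nq + r with q, r nonnegative integers, 0 ≤ r < n, and let A = (a_ij) ∈ D(m,n). Suppose k1, k2 are integers with 0 ≤ k1, k2 ≤ n such that every entry a_ij with i > k1 and j > k2 satisfies a_ij ≤ q. Then r(k1 + k2) + k1·k2·q ≥ rn. -/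
lemma card_filter_le (n k : ℕ) :
    (Finset.univ.filter (fun i : Fin n => k ≤ i.1)).card = n - k := by
  rw [← Nat.card_Ico k n]
  apply Finset.card_bij' (fun i _ => i.1) (fun j hj => ⟨j, (Finset.mem_Ico.mp hj).2⟩)
  · intros; rfl
  · intros; rfl
  · intro i hi
    simp only [Finset.mem_filter] at hi
    exact Finset.mem_Ico.mpr ⟨hi.2, i.2⟩
  · intro j hj
    simp [Finset.mem_Ico.mp hj |>.1]

lemma card_filter_lt (n k : ℕ) (hk : k ≤ n) :
    (Finset.univ.filter (fun i : Fin n => i.1 < k)).card = k := by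
  have h := Finset.card_filter_add_card_filter_not
    (s := (Finset.univ : Finset (Fin n))) (p := fun i => i.1 < k)
  simp only [not_lt] at h
  rw [card_filter_le] at h
  rw [Finset.card_univ, Fintype.card_fin] at h
  omega

/-- If A ∈ D(m,n) with m = nq + r, 0 ≤ r < n, and every entry in the last n - k1 rows
and last n - k2 columns is at most q, then r(k1 + k2) + k1·k2·q ≥ rn. -/
theorem key_inequality (m n q r k1 k2 : ℕ)
    (hm : m = n * q + r) (hr : r < n)
    (hk1 : k1 ≤ n) (hk2 : k2 ≤ n)
    (A : Fin n → Fin n → ℕ) (hA : IsDSM m n A)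
    (hblock : ∀ i j : Fin n, k1 ≤ (i : ℕ) → k2 ≤ (j : ℕ) → A i j ≤ q) :
    r * n ≤ r * (k1 + k2) + k1 * k2 * q := by
  obtain ⟨hrow, hcol⟩ := hA
  set S1 := Finset.univ.filter (fun i : Fin n => k1 ≤ i.1) with hS1
  set T1 := Finset.univ.filter (fun j : Fin n => j.1 < k2) with hT1
  set T2 := Finset.univ.filter (fun j : Fin n => k2 ≤ j.1) with hT2
  -- key counting inequality
  have key : (n - k1) * m ≤ k2 * m + (n - k1) * (n - k2) * q := by
    have hsplit : ∀ i : Fin n, i ∈ S1 → m ≤ ∑ j ∈ T1, A i j + (n - k2) * q := by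
      intro i hi
      simp only [hS1, Finset.mem_filter] at hi
      have hU : T1 ∪ T2 = Finset.univ := by
        ext j; simp [hT1, hT2, lt_or_ge]
      have hdisj : Disjoint T1 T2 := by
        rw [Finset.disjoint_left]
        intro j hj hj'
        simp only [hT1, hT2, Finset.mem_filter] at hj hj'
        omega
      have := hrow i
      rw [← hU, Finset.sum_union hdisj] at this
      have h2 : ∑ j ∈ T2, A i j ≤ (n - k2) * q := by
        calc ∑ j ∈ T2, A i j ≤ ∑ _j ∈ T2, q := by
              apply Finset.sum_le_sum
              intro j hj
              simp only [hT2, Finset.mem_filter] at hj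
              exact hblock i j hi.2 hj.2
          _ = (n - k2) * q := by rw [Finset.sum_const, card_filter_le, smul_eq_mul]
      omega
    calc (n - k1) * m = ∑ _i ∈ S1, m := by
          rw [Finset.sum_const, smul_eq_mul, ← card_filter_le n k1]
      _ ≤ ∑ i ∈ S1, (∑ j ∈ T1, A i j + (n - k2) * q) := Finset.sum_le_sum hsplit
      _ = (∑ i ∈ S1, ∑ j ∈ T1, A i j) + (n - k1) * ((n - k2) * q) := by
          rw [Finset.sum_add_distrib, Finset.sum_const, smul_eq_mul, card_filter_le]
      _ ≤ (∑ j ∈ T1, m) + (n - k1) * ((n - k2) * q) := by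
          gcongr
          rw [Finset.sum_comm]
          apply Finset.sum_le_sum
          intro j _
          rw [← hcol j]
          exact Finset.sum_le_sum_of_subset (Finset.subset_univ S1)
      _ = k2 * m + (n - k1) * (n - k2) * q := by
          rw [Finset.sum_const, smul_eq_mul, card_filter_lt n k2 hk2, mul_assoc]
  -- now pure arithmetic
  zify [hk1, hk2] at key ⊢
  nlinarith [key, sq_nonneg ((n : ℤ) - k1)]
end

section
/- Let m = qn + r with q, r nonnegative integers, n a positive integer, and 0 ≤ r ≤ n/2. Then every matrix A ∈ D(m,n) satisfies tropdet A ≤ qn; in particular U(m,n) ≤ qn. -/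
/-- tropdet A: minimum of a transversal sum over all permutations. -/
def tropdet {n : ℕ} (A : Fin n → Fin n → ℕ) : ℕ :=
  Finset.univ.inf' Finset.univ_nonempty fun σ : Equiv.Perm (Fin n) => ∑ i, A i (σ i)

/-- One step of the Hungarian-algorithm style improvement: either the current
feasible dual pair certifies the value `tropdet A`, or we can improve it by at least 1. -/
lemma dual_step {n : ℕ} (A : Fin n → Fin n → ℕ) (u v : Fin n → ℤ)
    (hfeas : ∀ i j, u i + v j ≤ (A i j : ℤ)) :
    ((tropdet A : ℤ) ≤ (∑ i, u i) + ∑ j, v j) ∨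
    ∃ u' v' : Fin n → ℤ, (∀ i j, u' i + v' j ≤ (A i j : ℤ)) ∧
      (∑ i, u i) + (∑ j, v j) + 1 ≤ (∑ i, u' i) + ∑ j, v' j := by
  classical
  set t : Fin n → Finset (Fin n) :=
    fun i => Finset.univ.filter (fun j => u i + v j = (A i j : ℤ)) with ht
  by_cases hHall : ∀ s : Finset (Fin n), s.card ≤ (s.biUnion t).card
  · left
    obtain ⟨f, hfinj, hft⟩ := (Finset.all_card_le_biUnion_card_iff_exists_injective t).mp hHall
    have hbij : Function.Bijective f := Finite.injective_iff_bijective.mp hfinj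
    let σ : Equiv.Perm (Fin n) := Equiv.ofBijective f hbij
    have h1 : tropdet A ≤ ∑ i, A i (σ i) := Finset.inf'_le _ (Finset.mem_univ σ)
    have h2 : (∑ i, (A i (σ i) : ℤ)) = (∑ i, u i) + ∑ j, v j := by
      have key : ∀ i, (A i (σ i) : ℤ) = u i + v (σ i) := by
        intro i
        have := hft i
        simp only [ht, Finset.mem_filter, Finset.mem_univ, true_and] at this
        exact this.symm
      rw [Finset.sum_congr rfl fun i _ => key i, Finset.sum_add_distrib,
        Equiv.sum_comp σ v]
    calc (tropdet A : ℤ) ≤ ∑ i, (A i (σ i) : ℤ) := by exact_mod_cast h1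
      _ = _ := h2
  · right
    push_neg at hHall
    obtain ⟨S, hS⟩ := hHall
    set T := S.biUnion t with hT
    refine ⟨fun i => u i + if i ∈ S then 1 else 0,
            fun j => v j - if j ∈ T then 1 else 0, ?_, ?_⟩
    · intro i j
      by_cases hi : i ∈ S
      · by_cases hj : j ∈ T
        · simpa [hi, hj] using hfeas i j
        · have hne : u i + v j ≠ (A i j : ℤ) := by
            intro h
            exact hj (Finset.mem_biUnion.mpr ⟨i, hi, by
              simp only [ht, Finset.mem_filter, Finset.mem_univ, true_and]; exact h⟩)
          have hlt : u i + v j < (A i j : ℤ) := lt_of_le_of_ne (hfeas i j) hne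
          simp only [hi, if_pos, hj, if_neg, not_false_iff]
          omega
      · by_cases hj : j ∈ T <;> simp [hi, hj] <;> [skip; exact hfeas i j]
        have := hfeas i j; omega
    · have hsu : (∑ i, (u i + if i ∈ S then (1:ℤ) else 0)) = (∑ i, u i) + S.card := by
        simp [Finset.sum_add_distrib, Finset.sum_ite_mem]
      have hsv : (∑ j, (v j - if j ∈ T then (1:ℤ) else 0)) = (∑ j, v j) - T.card := by
        simp [Finset.sum_sub_distrib, Finset.sum_ite_mem]
      rw [hsu, hsv]
      have : (T.card : ℤ) < S.card := by exact_mod_cast hS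
      linarith

/-- Strong duality (Egerváry): there is a feasible dual pair whose value
reaches `tropdet A`. -/
lemma exists_dual {n : ℕ} (A : Fin n → Fin n → ℕ) :
    ∃ u v : Fin n → ℤ, (∀ i j, u i + v j ≤ (A i j : ℤ)) ∧
      (tropdet A : ℤ) ≤ (∑ i, u i) + ∑ j, v j := by
  classical
  suffices h : ∀ c : ℕ, ∀ u v : Fin n → ℤ, (∀ i j, u i + v j ≤ (A i j : ℤ)) →
      (tropdet A : ℤ) - ((∑ i, u i) + ∑ j, v j) ≤ c →
      ∃ u' v' : Fin n → ℤ, (∀ i j, u' i + v' j ≤ (A i j : ℤ)) ∧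
        (tropdet A : ℤ) ≤ (∑ i, u' i) + ∑ j, v' j by
    refine h (tropdet A) (fun _ => 0) (fun _ => 0) (fun i j => by positivity) ?_
    simp
  intro c
  induction c with
  | zero =>
    intro u v hfeas hc
    exact ⟨u, v, hfeas, by push_cast at hc; linarith⟩
  | succ c ih =>
    intro u v hfeas hc
    rcases dual_step A u v hfeas with h | ⟨u', v', hfeas', himp⟩
    · exact ⟨u, v, hfeas, h⟩
    · exact ih u' v' hfeas' (by push_cast at hc ⊢; linarith)

/-- If m = qn + r with 0 ≤ r ≤ n/2, then every A ∈ D(m,n) has tropdet A ≤ qn. -/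
theorem tropdet_upper_bound_small_r (m n q r : ℕ) (hn : 0 < n)
    (hm : m = q * n + r) (hr : 2 * r ≤ n)
    (A : Fin n → Fin n → ℕ) (hA : IsDSM m n A) :
    tropdet A ≤ q * n := by
  classical
  by_contra hcon
  push_neg at hcon
  obtain ⟨u, v, hfeas, hval⟩ := exists_dual A
  set U : ℤ := ∑ i, u i with hU
  set V : ℤ := ∑ j, v j with hV
  have hnz : (0:ℤ) < n := by exact_mod_cast hn
  -- row constraints: n * u i ≤ m - V
  have hrow : ∀ i, (n:ℤ) * u i + V ≤ m := by
    intro i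
    have h1 : (∑ j, (u i + v j)) ≤ ∑ j, (A i j : ℤ) :=
      Finset.sum_le_sum fun j _ => hfeas i j
    have h2 : (∑ j, (A i j : ℤ)) = m := by
      rw [← Nat.cast_sum]; exact_mod_cast congrArg (Nat.cast (R := ℤ)) (hA.1 i)
    rw [Finset.sum_add_distrib, Finset.sum_const, Finset.card_univ, Fintype.card_fin,
      h2] at h1
    simpa [nsmul_eq_mul] using h1
  have hcol : ∀ j, (n:ℤ) * v j + U ≤ m := by
    intro j
    have h1 : (∑ i, (u i + v j)) ≤ ∑ i, (A i j : ℤ) :=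
      Finset.sum_le_sum fun i _ => hfeas i j
    have h2 : (∑ i, (A i j : ℤ)) = m := by
      rw [← Nat.cast_sum]; exact_mod_cast congrArg (Nat.cast (R := ℤ)) (hA.2 j)
    rw [Finset.sum_add_distrib, Finset.sum_const, Finset.card_univ, Fintype.card_fin,
      h2] at h1
    simpa [nsmul_eq_mul, add_comm] using h1
  set α : ℤ := ((m:ℤ) - V) % n with hα
  set β : ℤ := ((m:ℤ) - U) % n with hβ
  -- U ≤ (m - V) - α
  have hUb : U + α ≤ (m:ℤ) - V := by
    have hui : ∀ i, u i ≤ ((m:ℤ) - V) / n := by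
      intro i
      rw [Int.le_ediv_iff_mul_le hnz]
      have := hrow i; linarith [hrow i]
    have h1 : U ≤ (n:ℤ) * (((m:ℤ) - V) / n) := by
      calc U ≤ ∑ _i : Fin n, ((m:ℤ) - V) / n := Finset.sum_le_sum fun i _ => hui i
        _ = (n:ℤ) * (((m:ℤ) - V) / n) := by
          rw [Finset.sum_const, Finset.card_univ, Fintype.card_fin, nsmul_eq_mul]
    have h2 : (n:ℤ) * (((m:ℤ) - V) / n) + α = (m:ℤ) - V := Int.mul_ediv_add_emod _ _
    linarith
  have hVb : V + β ≤ (m:ℤ) - U := by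
    have hvj : ∀ j, v j ≤ ((m:ℤ) - U) / n := by
      intro j
      rw [Int.le_ediv_iff_mul_le hnz]
      linarith [hcol j]
    have h1 : V ≤ (n:ℤ) * (((m:ℤ) - U) / n) := by
      calc V ≤ ∑ _j : Fin n, ((m:ℤ) - U) / n := Finset.sum_le_sum fun j _ => hvj j
        _ = (n:ℤ) * (((m:ℤ) - U) / n) := by
          rw [Finset.sum_const, Finset.card_univ, Fintype.card_fin, nsmul_eq_mul]
    have h2 : (n:ℤ) * (((m:ℤ) - U) / n) + β = (m:ℤ) - U := Int.mul_ediv_add_emod _ _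
    linarith
  have hα0 : 0 ≤ α := Int.emod_nonneg _ (by exact_mod_cast hn.ne')
  have hβ0 : 0 ≤ β := Int.emod_nonneg _ (by exact_mod_cast hn.ne')
  -- set k = U + V - q*n ≥ 1
  set k : ℤ := U + V - (q:ℤ) * n with hk
  have hk1 : 1 ≤ k := by
    have : (q:ℤ) * n + 1 ≤ tropdet A := by exact_mod_cast hcon
    have := hval
    simp only [hk]
    push_cast at this ⊢
    linarith
  have hαk : α ≤ (r:ℤ) - k := by
    have hmz : (m:ℤ) = (q:ℤ) * n + r := by exact_mod_cast hm
    omega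
  have hβk : β ≤ (r:ℤ) - k := by
    have hmz : (m:ℤ) = (q:ℤ) * n + r := by exact_mod_cast hm
    omega
  have hrn : 2 * (r:ℤ) ≤ n := by exact_mod_cast hr
  -- congruence: (α + β) % n = (2m - (U+V)) % n = 2r - k
  have hcong : (α + β) % n = (((m:ℤ) - V) + ((m:ℤ) - U)) % n := by
    rw [Int.add_emod ((m:ℤ) - V) ((m:ℤ) - U)]
  have hsum : ((m:ℤ) - V) + ((m:ℤ) - U) = (2 * (r:ℤ) - k) + (n:ℤ) * q := by
    have hmz : (m:ℤ) = (q:ℤ) * n + r := by exact_mod_cast hm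
    simp only [hk]
    ring_nf
    omega
  have h2rk : (((m:ℤ) - V) + ((m:ℤ) - U)) % n = 2 * (r:ℤ) - k := by
    rw [hsum, Int.add_mul_emod_self_left, Int.emod_eq_of_lt (by omega) (by omega)]
  have hmod : (α + β) % n = α + β := Int.emod_eq_of_lt (by omega) (by omega)
  omega
end

section
/- Let m = qn + r with q, r nonnegative integers, n a positive integer, and n/2 ≤ r < n. Then every matrix A ∈ D(m,n) satisfies tropdet A ≤ qn + (2r − n); in particular U(m,n) ≤ qn + 2r − n. -/
open Finset

section

variable {n : ℕ}

lemma tropdet_le_sum (A : Fin n → Fin n → ℕ) (σ : Equiv.Perm (Fin n)) :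
    tropdet A ≤ ∑ i, A i (σ i) :=
  inf'_le _ (mem_univ σ)

lemma exists_tropdet_eq_sum (A : Fin n → Fin n → ℕ) :
    ∃ σ : Equiv.Perm (Fin n), tropdet A = ∑ i, A i (σ i) := by
  obtain ⟨σ, -, h⟩ := exists_mem_eq_inf' univ_nonempty fun σ : Equiv.Perm (Fin n) =>
    ∑ i, A i (σ i)
  exact ⟨σ, h⟩

lemma tropdet_add_sum_eq {A B : Fin n → Fin n → ℕ} {a b : Fin n → ℕ}
    (h : ∀ i j, B i j + a i = A i j + b j) :
    tropdet B + ∑ i, a i = tropdet A + ∑ j, b j := by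
  have hperm : ∀ σ : Equiv.Perm (Fin n),
      ∑ i, B i (σ i) + ∑ i, a i = ∑ i, A i (σ i) + ∑ j, b j := by
    intro σ
    rw [← Equiv.sum_comp σ b, ← sum_add_distrib, ← sum_add_distrib]
    exact sum_congr rfl fun i _ => h i (σ i)
  obtain ⟨σ, hσ⟩ := exists_tropdet_eq_sum A
  obtain ⟨τ, hτ⟩ := exists_tropdet_eq_sum B
  have := tropdet_le_sum A τ
  have := tropdet_le_sum B σ
  have := hperm σ
  have := hperm τ
  omega

/-- König's theorem for the zeros of `A`, via Hall's marriage theorem. -/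
lemma tropdet_eq_zero_or_exists_cover (A : Fin n → Fin n → ℕ) :
    tropdet A = 0 ∨ ∃ R C : Finset (Fin n), #R + #C < n ∧ ∀ i j, A i j = 0 → i ∈ R ∨ j ∈ C := by
  set zeros : Fin n → Finset (Fin n) := fun i => univ.filter fun j => A i j = 0
  by_cases hall : ∀ s : Finset (Fin n), #s ≤ #(s.biUnion zeros)
  · obtain ⟨f, hf, hzero⟩ := (all_card_le_biUnion_card_iff_exists_injective zeros).mp hall
    have hsum : ∑ i, A i (f i) = 0 := sum_eq_zero fun i _ => by simpa [zeros] using hzero i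
    have := tropdet_le_sum A (Equiv.ofBijective f (Finite.injective_iff_bijective.mp hf))
    simp only [Equiv.ofBijective_apply, hsum] at this
    exact Or.inl (Nat.le_zero.mp this)
  · push Not at hall
    obtain ⟨s, hs⟩ := hall
    refine Or.inr ⟨sᶜ, s.biUnion zeros, ?_, fun i j hij => ?_⟩
    · have := card_le_univ s
      rw [card_compl, Fintype.card_fin] at *
      omega
    · by_cases hi : i ∈ s
      · exact Or.inr (mem_biUnion.mpr ⟨i, hi, by simpa [zeros] using hij⟩)
      · exact Or.inl (mem_compl.mpr hi)

/-- `(u, w)` is a feasible solution of the linear program dual to the assignment problem. -/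
def IsDualFeasible (A : Fin n → Fin n → ℕ) (u w : Fin n → ℕ) : Prop :=
  ∀ i j, u i ≤ A i j + w j

lemma exists_isDualFeasible_of_add_eq {A B : Fin n → Fin n → ℕ} {a b : Fin n → ℕ}
    (h : ∀ i j, B i j + a i = A i j + b j)
    (hB : ∃ u w, IsDualFeasible B u w ∧ tropdet B + ∑ j, w j ≤ ∑ i, u i) :
    ∃ u w, IsDualFeasible A u w ∧ tropdet A + ∑ j, w j ≤ ∑ i, u i := by
  obtain ⟨u, w, hfeas, hval⟩ := hB
  refine ⟨u + a, w + b, fun i j => ?_, ?_⟩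
  · have := hfeas i j
    have := h i j
    simp only [Pi.add_apply]
    omega
  · have := tropdet_add_sum_eq h
    simp only [Pi.add_apply, sum_add_distrib]
    omega

/-- Egerváry's theorem, proved by the Hungarian method: a cover of the zeros by fewer than `n`
lines allows subtracting `1` off the uncovered rows and adding it back on the covered columns,
which lowers `tropdet` by `n - #R - #C`. -/
theorem exists_isDualFeasible (A : Fin n → Fin n → ℕ) :
    ∃ u w, IsDualFeasible A u w ∧ tropdet A + ∑ j, w j ≤ ∑ i, u i := by
  induction h : tropdet A using Nat.strong_induction_on generalizing A with
  | _ t ih =>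
  subst h
  rcases tropdet_eq_zero_or_exists_cover A with h0 | ⟨R, C, hcard, hcover⟩
  · exact ⟨0, 0, fun _ _ => Nat.zero_le _, by simp [h0]⟩
  · let a : Fin n → ℕ := fun i => if i ∈ Rᶜ then 1 else 0
    let b : Fin n → ℕ := fun j => if j ∈ C then 1 else 0
    have hab : ∀ i j, a i ≤ A i j + b j := by
      intro i j
      by_cases hi : i ∈ R
      · simp [a, hi]
      · by_cases hj : j ∈ C
        · simp [a, b, hi, hj]
        · have := mt (hcover i j) (by tauto)
          simp only [a, b, mem_compl, hi, hj, if_true, if_false, not_false_eq_true]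
          omega
    have hB : ∀ i j, (A i j + b j - a i) + a i = A i j + b j :=
      fun i j => Nat.sub_add_cancel (hab i j)
    have htrop := tropdet_add_sum_eq hB
    have hsuma : ∑ i, a i = n - #R := by
      simp only [a, sum_ite_mem, univ_inter, sum_const, smul_eq_mul, mul_one, card_compl,
        Fintype.card_fin]
    have hsumb : ∑ j, b j = #C := by
      simp only [b, sum_ite_mem, univ_inter, sum_const, smul_eq_mul, mul_one]
    exact exists_isDualFeasible_of_add_eq hB (ih _ (by omega) _ rfl)

lemma IsDualFeasible.tsub_const {A : Fin n → Fin n → ℕ} {u w : Fin n → ℕ}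
    (h : IsDualFeasible A u w) (c : ℕ) :
    IsDualFeasible A (fun i => u i - c) (fun j => w j - c) := by
  intro i j
  have := h i j
  show u i - c ≤ A i j + (w j - c)
  omega

theorem exists_isDualFeasible_eq_zero (A : Fin n → Fin n → ℕ) (hn : 0 < n) :
    ∃ u w, IsDualFeasible A u w ∧ tropdet A + ∑ j, w j ≤ ∑ i, u i ∧ ∃ j₀, w j₀ = 0 := by
  obtain ⟨u, w, hfeas, hval⟩ := exists_isDualFeasible A
  obtain ⟨j₀, -, hj₀⟩ := exists_min_image univ w (univ_nonempty_iff.mpr ⟨⟨0, hn⟩⟩)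
  refine ⟨_, _, hfeas.tsub_const (w j₀), ?_, j₀, Nat.sub_self _⟩
  have hw : ∑ j, w j = ∑ j, (w j - w j₀) + n * w j₀ := by
    rw [← smul_eq_mul, ← Fin.sum_const, ← sum_add_distrib]
    exact sum_congr rfl fun j _ => (Nat.sub_add_cancel (hj₀ j (mem_univ j))).symm
  have hu : ∑ i, u i ≤ ∑ i, (u i - w j₀) + n * w j₀ := by
    rw [← smul_eq_mul, ← Fin.sum_const, ← sum_add_distrib]
    exact sum_le_sum fun i _ => le_tsub_add
  omega

theorem tropdet_le_of_isDualFeasible {m q r : ℕ} {A : Fin n → Fin n → ℕ} {u w : Fin n → ℕ}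
    (hA : IsDSM m n A) (hm : m = q * n + r) (hfeas : IsDualFeasible A u w)
    (hval : tropdet A + ∑ j, w j ≤ ∑ i, u i) {j₀ : Fin n} (hj₀ : w j₀ = 0) :
    tropdet A ≤ q * n + (2 * r - n) := by
  have hcol : ∑ i, u i ≤ m := by
    rw [← hA.2 j₀]
    exact sum_le_sum fun i _ => by simpa [hj₀] using hfeas i j₀
  have hrow : ∀ i, n * u i ≤ m + ∑ j, w j := by
    intro i
    rw [← hA.1 i, ← sum_add_distrib, ← smul_eq_mul, ← Fin.sum_const]
    exact sum_le_sum fun j _ => hfeas i j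
  by_cases hW : n - r ≤ ∑ j, w j
  · omega
  · have hu : ∀ i, u i ≤ q := by
      intro i
      have := hrow i
      have : n * u i < n * (q + 1) := by rw [mul_add, mul_one, mul_comm n q]; omega
      exact Nat.lt_succ_iff.mp (Nat.lt_of_mul_lt_mul_left this)
    have : ∑ i, u i ≤ q * n := by
      calc ∑ i, u i ≤ ∑ _i : Fin n, q := sum_le_sum fun i _ => hu i
        _ = q * n := by simp [mul_comm]
    omega

end

theorem tropdet_upper_bound_large_r_general (m n q r : ℕ) (hn : 0 < n)
    (hm : m = q * n + r)
    (A : Fin n → Fin n → ℕ) (hA : IsDSM m n A) :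
    tropdet A ≤ q * n + (2 * r - n) := by
  obtain ⟨u, w, hfeas, hval, j₀, hj₀⟩ := exists_isDualFeasible_eq_zero A hn
  exact tropdet_le_of_isDualFeasible hA hm hfeas hval hj₀

/-- If m = qn + r with n/2 ≤ r < n, then every A ∈ D(m,n) has tropdet A ≤ qn + (2r - n). -/
theorem tropdet_upper_bound_large_r (m n q r : ℕ) (hn : 0 < n)
    (hm : m = q * n + r) (hr1 : n ≤ 2 * r) (hr2 : r < n)
    (A : Fin n → Fin n → ℕ) (hA : IsDSM m n A) :
    tropdet A ≤ q * n + (2 * r - n) :=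
  tropdet_upper_bound_large_r_general m n q r hn hm A hA
end
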